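/- arXiv:2306.14849 — 4 statements merged into one kernel-verified Lean document; each statement's English description precedes it below -/
import Mathlib

section
/- For all real s > 0, t > 0 and λ > 0, one has (λ^s / Γ(s)) · ∫₀^t b^{s−1} ν((t−b)λ) db = ν(tλ) − ∫₀^s (tλ)^r / Γ(r+1) dr. -/
open MeasureTheory Real

/-- The Volterra function `ν(x) = ∫₀^∞ x^s / Γ(s+1) ds` (for `x > 0`; `ν(0) = 0`). -/
noncomputable def volterra (x : ℝ) : ℝ := ∫ s in Set.Ioi (0 : ℝ), x ^ s / Real.Gamma (s + 1)

/-!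
Writing `ν((t - b)λ)` as an integral over the exponent `r` and exchanging the order of
integration, the inner integral over `b` is the Riemann–Liouville integral of order `s` of a
power; the Beta integral evaluates it as `Γ(s) λ^(-s) (tλ)^(s+r) / Γ(s+r+1)`. Integrating over
`r > 0` is thus integrating the integrand of `ν(tλ)` over `r > s`, which is `ν(tλ)` minus the
part over `(0, s]`. Fubini applies because the integrand is nonnegative and the iterated integral
in this order is finite: `Γ(r + 1)` outgrows every exponential.
-/

open Set Filter Topology
open scoped Nat

namespace Real

lemma continuousOn_Gamma_add_one : ContinuousOn (fun r : ℝ => Gamma (r + 1)) (Ioi (-1)) :=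
  differentiableOn_Gamma_Ioi.continuousOn.comp (continuous_add_const 1).continuousOn
    fun r hr => by simp only [mem_Ioi] at hr ⊢; linarith

lemma tendsto_rpow_div_Gamma_add_one_atTop {c : ℝ} (hc : 0 ≤ c) :
    Tendsto (fun r : ℝ => c ^ r / Gamma (r + 1)) atTop (𝓝 0) := by
  set M := max c 1
  have hM : Tendsto (fun r : ℝ => M * (M ^ ⌊r⌋₊ / (⌊r⌋₊ ! : ℝ))) atTop (𝓝 0) := by
    simpa using ((FloorSemiring.tendsto_pow_div_factorial_atTop M).comp
      tendsto_nat_floor_atTop).const_mul M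
  refine squeeze_zero' ?_ ?_ hM
  · filter_upwards [eventually_ge_atTop 0] with r hr
    exact div_nonneg (rpow_nonneg hc r) (Gamma_pos_of_pos (by linarith)).le
  · filter_upwards [eventually_ge_atTop 1] with r hr
    set n := ⌊r⌋₊
    have hn : 1 ≤ n := Nat.le_floor (by simpa using hr)
    have hnum : c ^ r ≤ M * M ^ n := calc
      c ^ r ≤ M ^ r := rpow_le_rpow hc (le_max_left _ _) (by linarith)
      _ ≤ M ^ ((n : ℝ) + 1) :=
        rpow_le_rpow_of_exponent_le (le_max_right _ _) (Nat.lt_floor_add_one r).le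
      _ = M * M ^ n := by rw [rpow_add_one (by positivity), rpow_natCast, mul_comm]
    have hden : (n ! : ℝ) ≤ Gamma (r + 1) := by
      rw [← Gamma_nat_eq_factorial]
      refine Gamma_strictMonoOn_Ici.monotoneOn ?_ ?_ ?_
      · simp only [mem_Ici]; norm_cast; omega
      · simp only [mem_Ici]; linarith
      · linarith [Nat.floor_le (by linarith : (0 : ℝ) ≤ r)]
    rw [mul_div_assoc']
    exact div_le_div₀ (by positivity) hnum (by positivity) hden

lemma integrableOn_rpow_div_Gamma_add_one {x : ℝ} (hx : 0 ≤ x) :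
    IntegrableOn (fun r : ℝ => x ^ r / Gamma (r + 1)) (Ioi 0) := by
  rcases hx.eq_or_lt with rfl | hx
  · exact integrableOn_zero.congr_fun (fun r hr => by simp [zero_rpow (ne_of_gt hr)])
      measurableSet_Ioi
  refine integrable_of_isBigO_exp_neg one_pos ?_ ?_
  · exact (continuous_const_rpow hx.ne').continuousOn.div
      (continuousOn_Gamma_add_one.mono fun r hr => by
        simp only [mem_Ici, mem_Ioi] at hr ⊢; linarith)
      fun r hr => (Gamma_pos_of_pos (by simp only [mem_Ici] at hr; linarith)).ne'
  · -- `x ^ r / Γ(r + 1) = (x e) ^ r / Γ(r + 1) * e ^ (-r)`, and the first factor tends to `0`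
    have h := ((tendsto_rpow_div_Gamma_add_one_atTop (c := x * exp 1) (by positivity)).isBigO_one
      ℝ).mul (Asymptotics.isBigO_refl (fun r : ℝ => exp (-1 * r)) atTop)
    refine (h.congr_left fun r => ?_).trans (by simp [Asymptotics.isBigO_refl])
    rw [mul_rpow hx.le (exp_pos 1).le, ← exp_mul, neg_one_mul, exp_neg]
    field_simp

lemma integral_rpow_mul_sub_rpow {p q t : ℝ} (hp : 0 < p) (hq : 0 < q) (ht : 0 < t) :
    ∫ b in 0..t, b ^ (p - 1) * (t - b) ^ (q - 1)
      = t ^ (p + q - 1) * (Gamma p * Gamma q / Gamma (p + q)) := by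
  apply Complex.ofReal_injective
  have h := Complex.betaIntegral_scaled p q ht
  rw [Complex.betaIntegral_eq_Gamma_mul_div _ _ (by simpa) (by simpa)] at h
  push_cast [← Complex.Gamma_ofReal, Complex.ofReal_cpow ht.le]
  rw [← h, ← intervalIntegral.integral_ofReal]
  refine intervalIntegral.integral_congr fun b hb => ?_
  rw [uIcc_of_le ht.le] at hb
  push_cast [Complex.ofReal_cpow hb.1, Complex.ofReal_cpow (sub_nonneg.2 hb.2)]
  rfl

lemma integral_rpow_mul_rpow_div_Gamma {s r t lam : ℝ} (hs : 0 < s) (hr : -1 < r) (ht : 0 < t)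
    (hlam : 0 < lam) :
    ∫ b in 0..t, b ^ (s - 1) * (((t - b) * lam) ^ r / Gamma (r + 1))
      = Gamma s / lam ^ s * ((t * lam) ^ (s + r) / Gamma (s + r + 1)) := by
  have hbeta := integral_rpow_mul_sub_rpow hs (by linarith : 0 < r + 1) ht
  rw [show s + (r + 1) - 1 = s + r by ring, show s + (r + 1) = s + r + 1 by ring] at hbeta
  calc ∫ b in 0..t, b ^ (s - 1) * (((t - b) * lam) ^ r / Gamma (r + 1))
      = lam ^ r / Gamma (r + 1) * ∫ b in 0..t, b ^ (s - 1) * (t - b) ^ (r + 1 - 1) := by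
        rw [← intervalIntegral.integral_const_mul]
        refine intervalIntegral.integral_congr fun b hb => ?_
        rw [uIcc_of_le ht.le] at hb
        simp only [add_sub_cancel_right, mul_rpow (sub_nonneg.2 hb.2) hlam.le]
        ring
    _ = Gamma s / lam ^ s * ((t * lam) ^ (s + r) / Gamma (s + r + 1)) := by
        have := Gamma_pos_of_pos (by linarith : 0 < r + 1)
        rw [hbeta, mul_rpow ht.le hlam.le, rpow_add hlam]
        field_simp

end Real

lemma integrableOn_Ioi_comp_add {E : Type*} [NormedAddCommGroup E] {g : ℝ → E} {a : ℝ} :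
    IntegrableOn (fun r => g (a + r)) (Ioi 0) ↔ IntegrableOn g (Ioi a) := by
  simpa [Function.comp_def, add_comm] using
    (measurePreserving_add_right volume a).integrableOn_comp_preimage
      (measurableEmbedding_addRight a) (f := g) (s := Ioi a)

lemma setIntegral_Ioi_comp_add {E : Type*} [NormedAddCommGroup E] [NormedSpace ℝ E]
    (g : ℝ → E) (a : ℝ) :
    ∫ r in Ioi 0, g (a + r) = ∫ u in Ioi a, g u := by
  simpa [add_comm] using
    (measurePreserving_add_right volume a).setIntegral_preimage_emb
      (measurableEmbedding_addRight a) g (Ioi a)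

lemma integrable_rpow_mul_rpow_div_Gamma_prod {s t lam : ℝ} (hs : 0 < s) (ht : 0 < t)
    (hlam : 0 < lam) :
    Integrable
      (Function.uncurry fun b r : ℝ => b ^ (s - 1) * (((t - b) * lam) ^ r / Gamma (r + 1)))
      ((volume.restrict (Ioc 0 t)).prod (volume.restrict (Ioi 0))) := by
  have hmeas : AEStronglyMeasurable
      (Function.uncurry fun b r : ℝ => b ^ (s - 1) * (((t - b) * lam) ^ r / Gamma (r + 1)))
      ((volume.restrict (Ioc 0 t)).prod (volume.restrict (Ioi 0))) := by
    rw [Measure.prod_restrict]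
    refine ContinuousOn.aestronglyMeasurable ?_ (measurableSet_Ioc.prod measurableSet_Ioi)
    rintro ⟨b, r⟩ ⟨hb, hr : 0 < r⟩
    have hΓ : ContinuousAt (fun p : ℝ × ℝ => Gamma (p.2 + 1)) (b, r) :=
      (continuousOn_Gamma_add_one.continuousAt (Ioi_mem_nhds (by linarith))).comp continuousAt_snd
    exact ((continuousAt_fst.rpow_const (Or.inl hb.1.ne')).mul
      (((by fun_prop : ContinuousAt (fun p : ℝ × ℝ => (t - p.1) * lam) (b, r)).rpow
        continuousAt_snd (Or.inr hr)).div hΓ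
          (Gamma_pos_of_pos (by linarith)).ne')).continuousWithinAt
  rw [integrable_prod_iff' hmeas]
  refine ⟨(ae_restrict_iff' measurableSet_Ioi).2 (ae_of_all _ fun r (hr : 0 < r) => ?_), ?_⟩
  · refine (intervalIntegrable_iff_integrableOn_Ioc_of_le ht.le).1 ?_
    have hcont : Continuous fun b : ℝ => ((t - b) * lam) ^ r / Gamma (r + 1) :=
      ((by fun_prop : Continuous fun b : ℝ => (t - b) * lam).rpow_const
        fun _ => Or.inr hr.le).div_const _
    exact (intervalIntegral.intervalIntegrable_rpow' (by linarith)).mul_continuousOn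
      hcont.continuousOn
  · have hnorm : EqOn (fun r => Gamma s / lam ^ s * ((t * lam) ^ (s + r) / Gamma (s + r + 1)))
        (fun r => ∫ b in Ioc 0 t,
          ‖b ^ (s - 1) * (((t - b) * lam) ^ r / Gamma (r + 1))‖) (Ioi 0) := by
      intro r (hr : 0 < r)
      dsimp only
      rw [← integral_rpow_mul_rpow_div_Gamma hs (by linarith) ht hlam,
        intervalIntegral.integral_of_le ht.le]
      refine setIntegral_congr_fun measurableSet_Ioc fun b hb => (norm_of_nonneg ?_).symm
      have := Gamma_pos_of_pos (by linarith : 0 < r + 1)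
      have := rpow_nonneg (mul_nonneg (sub_nonneg.2 hb.2) hlam.le) r
      have := rpow_nonneg hb.1.le (s - 1)
      positivity
    refine IntegrableOn.congr_fun (Integrable.const_mul ?_ _) hnorm measurableSet_Ioi
    exact integrableOn_Ioi_comp_add.2
      ((integrableOn_rpow_div_Gamma_add_one (by positivity)).mono_set (Ioi_subset_Ioi hs.le))

lemma volterra_eq_integral_Ioc_add_integral_Ioi {x s : ℝ} (hx : 0 ≤ x) (hs : 0 ≤ s) :
    volterra x
      = (∫ r in Ioc 0 s, x ^ r / Gamma (r + 1)) + ∫ r in Ioi s, x ^ r / Gamma (r + 1) := by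
  have h := integrableOn_rpow_div_Gamma_add_one hx
  rw [volterra, ← setIntegral_union (Ioc_disjoint_Ioi le_rfl) measurableSet_Ioi
    (h.mono_set Ioc_subset_Ioi_self) (h.mono_set (Ioi_subset_Ioi hs)), Ioc_union_Ioi_eq_Ioi hs]

/-- For all `s, t, λ > 0`:
`(λ^s / Γ(s)) · ∫₀^t b^{s−1} ν((t−b)λ) db = ν(tλ) − ∫₀^s (tλ)^r / Γ(r+1) dr`. -/
theorem volterra_fractional_integral (s t lam : ℝ) (hs : 0 < s) (ht : 0 < t) (hlam : 0 < lam) :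
    (lam ^ s / Real.Gamma s) * (∫ b in (0 : ℝ)..t, b ^ (s - 1) * volterra ((t - b) * lam))
      = volterra (t * lam) - ∫ r in (0 : ℝ)..s, (t * lam) ^ r / Real.Gamma (r + 1) := by
  have hswap : ∫ b in 0..t, b ^ (s - 1) * volterra ((t - b) * lam)
      = ∫ r in Ioi 0, ∫ b in Ioc 0 t,
          b ^ (s - 1) * (((t - b) * lam) ^ r / Gamma (r + 1)) := by
    rw [intervalIntegral.integral_of_le ht.le,
      ← integral_integral_swap (integrable_rpow_mul_rpow_div_Gamma_prod hs ht hlam)]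
    exact setIntegral_congr_fun measurableSet_Ioc fun b _ => (integral_const_mul _ _).symm
  have hinner : ∫ r in Ioi 0, ∫ b in Ioc 0 t,
      b ^ (s - 1) * (((t - b) * lam) ^ r / Gamma (r + 1))
      = Gamma s / lam ^ s * ∫ r in Ioi s, (t * lam) ^ r / Gamma (r + 1) := by
    rw [← setIntegral_Ioi_comp_add (fun r => (t * lam) ^ r / Gamma (r + 1)), ← integral_const_mul]
    refine setIntegral_congr_fun measurableSet_Ioi fun r (hr : 0 < r) => ?_
    rw [← intervalIntegral.integral_of_le ht.le,
      integral_rpow_mul_rpow_div_Gamma hs (by linarith) ht hlam]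
  have hΓs := Gamma_pos_of_pos hs
  have hlams := rpow_pos_of_pos hlam s
  rw [hswap, hinner, volterra_eq_integral_Ioc_add_integral_Ioi (by positivity) hs.le,
    intervalIntegral.integral_of_le hs.le]
  field_simp
  ring
end

section
/- For all real β > 0 and β′ > 0, one has ∫₀^1 (ν((1−θ)β′) · ν(β) − ν(β′) · ν((1−θ)β)) · (1/θ) dθ = log(β/β′) · ν(β′) · ν(β) + ν(β′) − ν(β). -/
open MeasureTheory Real

/-!
Since `ν(x) - ν((1 - θ) x) = ∫₀^∞ (1 - (1 - θ)ˢ) xˢ / Γ(s + 1) ds`, exchanging the two integrals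
turns `∫₀¹ (ν(x) - ν((1 - θ) x)) / θ dθ` into `∫₀^∞ H(s) xˢ / Γ(s + 1) ds`, where
`H(s) = ∫₀¹ (1 - (1 - θ)ˢ) / θ dθ` interpolates the harmonic numbers. Both `H(s)` and
`ψ(s + 1) = Γ'(s + 1) / Γ(s + 1)` grow by `1 / (s + 1)` when `s` grows by one, and
`H(s) - log s → γ`, `ψ(s + 1) - log s → 0`; hence `H(s) = ψ(s + 1) + γ`. As
`(xˢ / Γ(s + 1))' = (log x - ψ(s + 1)) xˢ / Γ(s + 1)`, the fundamental theorem of calculus gives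
`∫₀¹ (ν(x) - ν((1 - θ) x)) / θ dθ = (log x + γ) ν(x) + 1`, and the identity is the combination
of this formula at `β` and at `β'` that cancels `γ`.
-/

open Filter Set Topology Asymptotics

lemma Gamma_add_one_pos {s : ℝ} (hs : -1 < s) : 0 < Gamma (s + 1) :=
  Gamma_pos_of_pos (by linarith)

lemma rpow_div_Gamma_add_one_le {c s : ℝ} (hc : 0 < c) (hs : 1 ≤ s) :
    c ^ s / Gamma (s + 1) ≤ max c 1 * (max c 1 ^ ⌊s⌋₊ / (⌊s⌋₊).factorial) := by
  set M := max c 1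
  have hM : 1 ≤ M := le_max_right c 1
  have hnum : c ^ s ≤ M ^ (⌊s⌋₊ + 1) := calc
    c ^ s ≤ M ^ s := rpow_le_rpow hc.le (le_max_left c 1) (by linarith)
    _ ≤ M ^ ((⌊s⌋₊ + 1 : ℕ) : ℝ) :=
      rpow_le_rpow_of_exponent_le hM (by exact_mod_cast (Nat.lt_floor_add_one s).le)
    _ = M ^ (⌊s⌋₊ + 1) := rpow_natCast M _
  have hden : ((⌊s⌋₊).factorial : ℝ) ≤ Gamma (s + 1) := by
    have h1 : (1 : ℝ) ≤ ⌊s⌋₊ := by exact_mod_cast Nat.le_floor (by exact_mod_cast hs)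
    rw [← Gamma_nat_eq_factorial]
    exact Gamma_strictMonoOn_Ici.monotoneOn (by simp only [mem_Ici]; linarith)
      (by simp only [mem_Ici]; linarith) (by linarith [Nat.floor_le (by linarith : (0:ℝ) ≤ s)])
  calc c ^ s / Gamma (s + 1) ≤ M ^ (⌊s⌋₊ + 1) / (⌊s⌋₊).factorial :=
        div_le_div₀ (by positivity) hnum (by positivity) hden
    _ = M * (M ^ ⌊s⌋₊ / (⌊s⌋₊).factorial) := by rw [pow_succ]; ring

lemma tendsto_rpow_div_Gamma_add_one_atTop {c : ℝ} (hc : 0 < c) :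
    Tendsto (fun s ↦ c ^ s / Gamma (s + 1)) atTop (𝓝 0) := by
  have hbound : Tendsto (fun s : ℝ ↦ max c 1 * (max c 1 ^ ⌊s⌋₊ / (⌊s⌋₊).factorial)) atTop
      (𝓝 0) := by
    simpa [Function.comp_def] using
      ((FloorSemiring.tendsto_pow_div_factorial_atTop (max c 1)).const_mul (max c 1)).comp
        tendsto_nat_floor_atTop
  refine tendsto_of_tendsto_of_tendsto_of_le_of_le' tendsto_const_nhds hbound ?_ ?_
  · filter_upwards [eventually_ge_atTop 0] with s hs
    have := Gamma_add_one_pos (by linarith : -1 < s)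
    positivity
  · filter_upwards [eventually_ge_atTop 1] with s hs
    exact rpow_div_Gamma_add_one_le hc hs

lemma isBigO_one_add_mul_rpow_div_Gamma_add_one {x : ℝ} (hx : 0 < x) :
    (fun s ↦ (1 + s) * (x ^ s / Gamma (s + 1))) =O[atTop] fun s ↦ exp (-1 * s) := by
  -- `1 + s ≤ eˢ`, so the weight is absorbed by passing from `x` to `e² x` at the cost of `e⁻ˢ`.
  have hlim := tendsto_rpow_div_Gamma_add_one_atTop (mul_pos (exp_pos 2) hx)
  refine IsBigO.trans ?_ (by simpa using (hlim.isBigO_one ℝ).mul (isBigO_refl _ atTop))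
  refine IsBigO.of_bound 1 ?_
  filter_upwards [eventually_ge_atTop 0] with s hs
  have hG := Gamma_add_one_pos (by linarith : -1 < s)
  have hexp : (exp 2 * x) ^ s * exp (-s) = exp s * x ^ s := by
    rw [mul_rpow (exp_pos 2).le hx.le, ← exp_mul, mul_right_comm, ← exp_add]
    ring_nf
  rw [norm_of_nonneg (by positivity), norm_of_nonneg (by positivity), one_mul, div_mul_eq_mul_div,
    hexp, mul_div_assoc']
  gcongr
  linarith [add_one_le_exp s]

lemma one_sub_one_sub_rpow_div_mem_Icc {s θ : ℝ} (hs : 0 ≤ s) (hθ : θ ∈ Icc (0 : ℝ) 1) :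
    (1 - (1 - θ) ^ s) / θ ∈ Icc 0 (1 + s) := by
  obtain ⟨hθ0, hθ1⟩ := hθ
  rcases hθ0.eq_or_lt with rfl | hθ0
  · -- at `θ = 0` the quotient is `0` by the convention `x / 0 = 0`
    simp; linarith
  have hle : 1 - (1 - θ) ^ s ≤ (1 + s) * θ := by
    rcases le_or_gt 1 s with h1 | h1
    · have := one_add_mul_self_le_rpow_one_add (by linarith : (-1 : ℝ) ≤ -θ) h1
      rw [← sub_eq_add_neg] at this
      nlinarith
    · have := rpow_le_rpow_of_exponent_ge' (by linarith) (by linarith) hs h1.le (x := 1 - θ)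
      rw [rpow_one] at this
      nlinarith
  refine ⟨div_nonneg ?_ hθ0.le, (div_le_iff₀ hθ0).mpr hle⟩
  linarith [rpow_le_one (by linarith : 0 ≤ 1 - θ) (by linarith) hs]

lemma intervalIntegrable_one_sub_one_sub_rpow_div {s : ℝ} (hs : 0 ≤ s) :
    IntervalIntegrable (fun θ ↦ (1 - (1 - θ) ^ s) / θ) volume 0 1 := by
  refine (intervalIntegrable_iff_integrableOn_Ioc_of_le zero_le_one).mpr <|
    IntegrableOn.of_bound measure_Ioc_lt_top
      (by fun_prop : Measurable _).aestronglyMeasurable (1 + s) ?_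
  filter_upwards [ae_restrict_mem measurableSet_Ioc] with θ hθ
  have := one_sub_one_sub_rpow_div_mem_Icc hs (Ioc_subset_Icc_self hθ)
  rw [norm_of_nonneg this.1]
  exact this.2

/-- Euler's integral `H_s = ∫₀¹ (1 - xˢ) / (1 - x) dx` for the harmonic numbers, in the variable
`θ = 1 - x`. -/
noncomputable def harmonicInterp (s : ℝ) : ℝ := ∫ θ in (0 : ℝ)..1, (1 - (1 - θ) ^ s) / θ

lemma harmonicInterp_mem_Icc {s : ℝ} (hs : 0 ≤ s) : harmonicInterp s ∈ Icc 0 (1 + s) := by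
  refine ⟨intervalIntegral.integral_nonneg zero_le_one
    fun θ hθ ↦ (one_sub_one_sub_rpow_div_mem_Icc hs hθ).1, ?_⟩
  refine (intervalIntegral.integral_mono_on zero_le_one
    (intervalIntegrable_one_sub_one_sub_rpow_div hs) intervalIntegrable_const
    fun θ hθ ↦ (one_sub_one_sub_rpow_div_mem_Icc hs hθ).2).trans_eq ?_
  simp

lemma monotoneOn_harmonicInterp : MonotoneOn harmonicInterp (Ici 0) := by
  intro s hs t ht hst
  refine intervalIntegral.integral_mono_on zero_le_one
    (intervalIntegrable_one_sub_one_sub_rpow_div hs)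
    (intervalIntegrable_one_sub_one_sub_rpow_div ht) fun θ ⟨hθ0, hθ1⟩ ↦ ?_
  refine div_le_div_of_nonneg_right (sub_le_sub_left ?_ 1) hθ0
  exact rpow_le_rpow_of_exponent_ge' (by linarith) (by linarith) hs hst

lemma integral_one_sub_rpow {s : ℝ} (hs : 0 ≤ s) :
    ∫ θ in (0 : ℝ)..1, (1 - θ) ^ s = 1 / (s + 1) := by
  rw [intervalIntegral.integral_comp_sub_left (fun θ ↦ θ ^ s),
    integral_rpow (Or.inl (by linarith))]
  simp [zero_rpow (by linarith : s + 1 ≠ 0)]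

lemma harmonicInterp_add_one {s : ℝ} (hs : 0 ≤ s) :
    harmonicInterp (s + 1) = harmonicInterp s + 1 / (s + 1) := by
  have hsplit : ∀ θ ∈ uIoc (0 : ℝ) 1,
      (1 - (1 - θ) ^ (s + 1)) / θ = (1 - (1 - θ) ^ s) / θ + (1 - θ) ^ s := by
    intro θ hθ
    rw [uIoc_of_le zero_le_one] at hθ
    have := hθ.1.ne'
    rw [rpow_add_one' (by linarith [hθ.2]) (by linarith)]
    field_simp
    ring
  rw [harmonicInterp, intervalIntegral.integral_congr_ae (ae_of_all _ hsplit),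
    intervalIntegral.integral_add (intervalIntegrable_one_sub_one_sub_rpow_div hs)
      (Continuous.intervalIntegrable (by fun_prop (disch := exact hs) :
        Continuous fun θ : ℝ ↦ (1 - θ) ^ s) _ _),
    integral_one_sub_rpow hs, harmonicInterp]

lemma harmonicInterp_natCast (n : ℕ) : harmonicInterp n = harmonic n := by
  induction n with
  | zero => simp [harmonicInterp]
  | succ n ih =>
    push_cast
    rw [harmonicInterp_add_one n.cast_nonneg, ih, harmonic_succ]
    push_cast
    ring

lemma tendsto_harmonicInterp_sub_log :
    Tendsto (fun t ↦ harmonicInterp t - log t) atTop (𝓝 eulerMascheroniConstant) := by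
  have hlower : Tendsto (fun t : ℝ ↦ (harmonic ⌊t⌋₊ : ℝ) - log (⌊t⌋₊ + 1)) atTop
      (𝓝 eulerMascheroniConstant) :=
    tendsto_harmonic_sub_log_add_one.comp (tendsto_nat_floor_atTop (α := ℝ))
  have hupper : Tendsto (fun t : ℝ ↦ (harmonic (⌊t⌋₊ + 1) : ℝ) - log ⌊t⌋₊) atTop
      (𝓝 eulerMascheroniConstant) := by
    have := ((tendsto_harmonic_sub_log.comp (tendsto_add_atTop_nat 1)).add
      tendsto_log_nat_add_one_sub_log).comp (tendsto_nat_floor_atTop (α := ℝ))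
    simpa [Function.comp_def] using this
  refine tendsto_of_tendsto_of_tendsto_of_le_of_le' hlower hupper ?_ ?_ <;>
    filter_upwards [eventually_ge_atTop 1] with t ht <;>
    have hfloor := Nat.floor_le (zero_le_one.trans ht) <;>
    rw [← harmonicInterp_natCast]
  · refine sub_le_sub (monotoneOn_harmonicInterp (mem_Ici.mpr (Nat.cast_nonneg _)) ?_ hfloor) ?_
    · simp only [mem_Ici]; linarith
    · exact log_le_log (by linarith) (Nat.lt_floor_add_one t).le
  · refine sub_le_sub (monotoneOn_harmonicInterp ?_ ?_ ?_) ?_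
    · simp only [mem_Ici]; linarith
    · exact mem_Ici.mpr (by positivity)
    · push_cast; exact (Nat.lt_floor_add_one t).le
    · exact log_le_log (by exact_mod_cast Nat.floor_pos.mpr ht) hfloor

lemma differentiableAt_Gamma_of_pos {s : ℝ} (hs : 0 < s) : DifferentiableAt ℝ Gamma s :=
  differentiableAt_Gamma fun m ↦ by linarith [(m.cast_nonneg : (0 : ℝ) ≤ m)]

lemma logDeriv_Gamma_add_one {s : ℝ} (hs : 0 < s) :
    logDeriv Gamma (s + 1) = logDeriv Gamma s + 1 / s := by
  have hshift : logDeriv (fun t ↦ Gamma (t + 1)) s = logDeriv Gamma (s + 1) := by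
    simpa [Function.comp_def] using logDeriv_comp (f := Gamma) (g := fun t ↦ t + 1)
      (differentiableAt_Gamma_of_pos (by linarith)) (by fun_prop)
  have hrec : (fun t ↦ Gamma (t + 1)) =ᶠ[𝓝 s] fun t ↦ t * Gamma t := by
    filter_upwards [eventually_gt_nhds hs] with t ht using Gamma_add_one ht.ne'
  rw [← hshift, (logDeriv_congr_nhds hrec).eq_of_nhds,
    logDeriv_mul (f := fun t ↦ t) s hs.ne' (Gamma_pos_of_pos hs).ne' differentiableAt_id
      (differentiableAt_Gamma_of_pos hs), add_comm]
  simp [logDeriv_apply]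

lemma deriv_log_Gamma {s : ℝ} (hs : 0 < s) : deriv (log ∘ Gamma) s = logDeriv Gamma s :=
  deriv_log_comp_eq_logDeriv (differentiableAt_Gamma_of_pos hs) (Gamma_pos_of_pos hs).ne'

lemma log_Gamma_add_one {s : ℝ} (hs : 0 < s) :
    (log ∘ Gamma) (s + 1) = (log ∘ Gamma) s + log s := by
  simp only [Function.comp_apply, Gamma_add_one hs.ne',
    log_mul hs.ne' (Gamma_pos_of_pos hs).ne', add_comm]

lemma log_le_logDeriv_Gamma_add_one {x : ℝ} (hx : 0 < x) : log x ≤ logDeriv Gamma (x + 1) := by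
  have hx1 : 0 < x + 1 := by linarith
  rw [← deriv_log_Gamma hx1]
  refine (le_of_eq ?_).trans <| convexOn_log_Gamma.slope_le_deriv hx hx1 (by linarith)
    ((differentiableAt_Gamma_of_pos hx1).log (Gamma_pos_of_pos hx1).ne')
  rw [slope_def_field, add_sub_cancel_left, div_one, log_Gamma_add_one hx, add_sub_cancel_left]

lemma logDeriv_Gamma_add_one_le_log {x : ℝ} (hx : -1 < x) :
    logDeriv Gamma (x + 1) ≤ log (x + 1) := by
  have hx1 : 0 < x + 1 := by linarith
  rw [← deriv_log_Gamma hx1]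
  refine (convexOn_log_Gamma.deriv_le_slope hx1 (by linarith : (0 : ℝ) < x + 1 + 1)
    (by linarith) ((differentiableAt_Gamma_of_pos hx1).log (Gamma_pos_of_pos hx1).ne')).trans
    (le_of_eq ?_)
  rw [slope_def_field, add_sub_cancel_left, div_one, log_Gamma_add_one hx1, add_sub_cancel_left]

lemma tendsto_logDeriv_Gamma_add_one_sub_log :
    Tendsto (fun t ↦ logDeriv Gamma (t + 1) - log t) atTop (𝓝 0) := by
  refine tendsto_of_tendsto_of_tendsto_of_le_of_le' tendsto_const_nhds
    (tendsto_log_comp_add_sub_log 1) ?_ ?_ <;>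
    filter_upwards [eventually_gt_atTop 0] with t ht
  · linarith [log_le_logDeriv_Gamma_add_one ht]
  · linarith [logDeriv_Gamma_add_one_le_log (by linarith : -1 < t)]

theorem logDeriv_Gamma_add_one_eq_harmonicInterp_sub {s : ℝ} (hs : 0 ≤ s) :
    logDeriv Gamma (s + 1) = harmonicInterp s - eulerMascheroniConstant := by
  set D : ℝ → ℝ := fun t ↦ logDeriv Gamma (t + 1) - harmonicInterp t
  have hperiodic (n : ℕ) : D (s + n) = D s := by
    induction n with
    | zero => simp
    | succ n ih =>
      have hsn : 0 ≤ s + n := by positivity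
      simp only [D, Nat.cast_succ, ← add_assoc] at ih ⊢
      rw [logDeriv_Gamma_add_one (by linarith), harmonicInterp_add_one hsn, ← ih]
      ring
  have hlim : Tendsto D atTop (𝓝 (0 - eulerMascheroniConstant)) :=
    (tendsto_logDeriv_Gamma_add_one_sub_log.sub tendsto_harmonicInterp_sub_log).congr
      fun t ↦ by ring
  have hconst : Tendsto (fun n : ℕ ↦ D (s + n)) atTop (𝓝 (0 - eulerMascheroniConstant)) :=
    hlim.comp (tendsto_atTop_add_const_left _ s tendsto_natCast_atTop_atTop)
  simp only [hperiodic] at hconst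
  linarith [tendsto_nhds_unique tendsto_const_nhds hconst]

lemma hasDerivAt_rpow_div_Gamma_add_one {x s : ℝ} (hx : 0 < x) (hs : -1 < s) :
    HasDerivAt (fun t ↦ x ^ t / Gamma (t + 1))
      ((log x - logDeriv Gamma (s + 1)) * (x ^ s / Gamma (s + 1))) s := by
  have hG := Gamma_add_one_pos hs
  have hden : HasDerivAt (fun t ↦ Gamma (t + 1)) (deriv Gamma (s + 1)) s :=
    (differentiableAt_Gamma_of_pos (by linarith)).hasDerivAt.comp_add_const s 1
  refine ((hasStrictDerivAt_const_rpow hx s).hasDerivAt.div hden hG.ne').congr_deriv ?_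
  rw [logDeriv_apply]
  field_simp

lemma continuousOn_rpow_div_Gamma_add_one {x : ℝ} (hx : 0 < x) :
    ContinuousOn (fun s ↦ x ^ s / Gamma (s + 1)) (Ici 0) := fun s hs ↦
  (hasDerivAt_rpow_div_Gamma_add_one hx (by linarith [mem_Ici.mp hs])).continuousAt
    |>.continuousWithinAt

lemma integrableOn_one_add_mul_rpow_div_Gamma_add_one {x : ℝ} (hx : 0 < x) :
    IntegrableOn (fun s ↦ (1 + s) * (x ^ s / Gamma (s + 1))) (Ioi 0) :=
  integrable_of_isBigO_exp_neg one_pos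
    ((continuous_const.add continuous_id).continuousOn.mul (continuousOn_rpow_div_Gamma_add_one hx))
    (isBigO_one_add_mul_rpow_div_Gamma_add_one hx)

lemma integrableOn_rpow_div_Gamma_add_one {x : ℝ} (hx : 0 < x) :
    IntegrableOn (fun s ↦ x ^ s / Gamma (s + 1)) (Ioi 0) := by
  refine (integrableOn_one_add_mul_rpow_div_Gamma_add_one hx).mono'
    ((continuousOn_rpow_div_Gamma_add_one hx).mono Ioi_subset_Ici_self
      |>.aestronglyMeasurable measurableSet_Ioi) ?_
  filter_upwards [ae_restrict_mem measurableSet_Ioi] with s hs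
  have := Gamma_add_one_pos (by linarith [mem_Ioi.mp hs] : -1 < s)
  rw [norm_of_nonneg (by positivity)]
  exact le_mul_of_one_le_left (by positivity) (by linarith [mem_Ioi.mp hs])

lemma integrableOn_log_sub_logDeriv_Gamma_mul {x : ℝ} (hx : 0 < x) :
    IntegrableOn (fun s ↦ (log x - logDeriv Gamma (s + 1)) * (x ^ s / Gamma (s + 1))) (Ioi 0) := by
  set K := |log x| + |eulerMascheroniConstant| + 1
  have hmeas : AEStronglyMeasurable
      (fun s ↦ (log x - logDeriv Gamma (s + 1)) * (x ^ s / Gamma (s + 1)))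
      (volume.restrict (Ioi 0)) := by
    refine (measurable_deriv fun t ↦ x ^ t / Gamma (t + 1)).aestronglyMeasurable.congr ?_
    filter_upwards [ae_restrict_mem measurableSet_Ioi] with s hs
    exact (hasDerivAt_rpow_div_Gamma_add_one hx (by linarith [mem_Ioi.mp hs])).deriv
  refine ((integrableOn_one_add_mul_rpow_div_Gamma_add_one hx).const_mul K).mono' hmeas ?_
  filter_upwards [ae_restrict_mem measurableSet_Ioi] with s hs
  have hs0 : 0 ≤ s := le_of_lt hs
  have := Gamma_add_one_pos (by linarith : -1 < s)
  obtain ⟨hH0, hH1⟩ := harmonicInterp_mem_Icc hs0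
  have hψ : |log x - logDeriv Gamma (s + 1)| ≤ K * (1 + s) := by
    rw [logDeriv_Gamma_add_one_eq_harmonicInterp_sub hs0]
    calc |log x - (harmonicInterp s - eulerMascheroniConstant)|
        ≤ |log x| + |eulerMascheroniConstant| + |harmonicInterp s| := by
          rw [sub_sub_eq_add_sub]
          exact (abs_sub _ _).trans (add_le_add_left (abs_add_le _ _) _)
      _ ≤ K * (1 + s) := by
          rw [abs_of_nonneg hH0]
          nlinarith [abs_nonneg (log x), abs_nonneg eulerMascheroniConstant]
  rw [norm_mul, norm_of_nonneg (by positivity : 0 ≤ x ^ s / Gamma (s + 1)), norm_eq_abs,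
    ← mul_assoc]
  gcongr

lemma integral_log_sub_logDeriv_Gamma_mul {x : ℝ} (hx : 0 < x) :
    ∫ s in Ioi 0, (log x - logDeriv Gamma (s + 1)) * (x ^ s / Gamma (s + 1)) = -1 := by
  rw [integral_Ioi_of_hasDerivAt_of_tendsto'
    (fun s hs ↦ hasDerivAt_rpow_div_Gamma_add_one hx (by linarith [mem_Ici.mp hs]))
    (integrableOn_log_sub_logDeriv_Gamma_mul hx) (tendsto_rpow_div_Gamma_add_one_atTop hx)]
  simp

lemma harmonicInterp_mul_eqOn {x : ℝ} : EqOn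
    (fun s ↦ harmonicInterp s * (x ^ s / Gamma (s + 1)))
    (fun s ↦ (log x + eulerMascheroniConstant) * (x ^ s / Gamma (s + 1)) -
      (log x - logDeriv Gamma (s + 1)) * (x ^ s / Gamma (s + 1))) (Ioi 0) := fun s hs ↦ by
  simp only [logDeriv_Gamma_add_one_eq_harmonicInterp_sub (le_of_lt hs)]
  ring

lemma integrableOn_harmonicInterp_mul_rpow_div_Gamma_add_one {x : ℝ} (hx : 0 < x) :
    IntegrableOn (fun s ↦ harmonicInterp s * (x ^ s / Gamma (s + 1))) (Ioi 0) :=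
  IntegrableOn.congr_fun (((integrableOn_rpow_div_Gamma_add_one hx).const_mul _).sub
    (integrableOn_log_sub_logDeriv_Gamma_mul hx)) harmonicInterp_mul_eqOn.symm measurableSet_Ioi

lemma integral_harmonicInterp_mul_rpow_div_Gamma_add_one {x : ℝ} (hx : 0 < x) :
    ∫ s in Ioi 0, harmonicInterp s * (x ^ s / Gamma (s + 1)) =
      (log x + eulerMascheroniConstant) * volterra x + 1 := by
  rw [setIntegral_congr_fun measurableSet_Ioi harmonicInterp_mul_eqOn,
    integral_sub ((integrableOn_rpow_div_Gamma_add_one hx).const_mul _)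
      (integrableOn_log_sub_logDeriv_Gamma_mul hx),
    integral_const_mul, integral_log_sub_logDeriv_Gamma_mul hx, volterra, sub_neg_eq_add]

lemma harmonicInterp_eq_setIntegral_Ioo (s : ℝ) :
    harmonicInterp s = ∫ θ in Ioo 0 1, (1 - (1 - θ) ^ s) / θ := by
  rw [harmonicInterp, intervalIntegral.integral_of_le zero_le_one, integral_Ioc_eq_integral_Ioo]

lemma integral_one_sub_one_sub_rpow_div_mul {x θ : ℝ} (hx : 0 < x) (hθ : θ ∈ Ioo (0 : ℝ) 1) :
    ∫ s in Ioi 0, (1 - (1 - θ) ^ s) / θ * (x ^ s / Gamma (s + 1)) =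
      (volterra x - volterra ((1 - θ) * x)) / θ := by
  have h1θ : 0 < 1 - θ := by linarith [hθ.2]
  have hsplit (s : ℝ) : (1 - (1 - θ) ^ s) / θ * (x ^ s / Gamma (s + 1)) =
      (x ^ s / Gamma (s + 1) - ((1 - θ) * x) ^ s / Gamma (s + 1)) / θ := by
    rw [mul_rpow h1θ.le hx.le]
    ring
  simp_rw [hsplit]
  rw [integral_div, integral_sub (integrableOn_rpow_div_Gamma_add_one hx)
    (integrableOn_rpow_div_Gamma_add_one (mul_pos h1θ hx)), volterra, volterra]

lemma integrable_one_sub_one_sub_rpow_div_mul {x : ℝ} (hx : 0 < x) :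
    Integrable (Function.uncurry fun s θ ↦ (1 - (1 - θ) ^ s) / θ * (x ^ s / Gamma (s + 1)))
      ((volume.restrict (Ioi 0)).prod (volume.restrict (Ioo 0 1))) := by
  have hmeas : AEStronglyMeasurable
      (Function.uncurry fun s θ ↦ (1 - (1 - θ) ^ s) / θ * (x ^ s / Gamma (s + 1)))
      ((volume.restrict (Ioi 0)).prod (volume.restrict (Ioo 0 1))) :=
    (by fun_prop : Measurable fun p : ℝ × ℝ ↦ (1 - (1 - p.2) ^ p.1) / p.2).aestronglyMeasurable.mul
      ((continuousOn_rpow_div_Gamma_add_one hx).mono Ioi_subset_Ici_self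
        |>.aestronglyMeasurable measurableSet_Ioi).comp_fst
  refine (integrable_prod_iff hmeas).mpr ⟨?_, ?_⟩
  · filter_upwards [ae_restrict_mem measurableSet_Ioi] with s hs
    simp only [Function.uncurry_apply_pair]
    exact ((intervalIntegrable_one_sub_one_sub_rpow_div (le_of_lt hs)).1.mono_set
      Ioo_subset_Ioc_self).mul_const _
  · refine IntegrableOn.congr_fun (integrableOn_harmonicInterp_mul_rpow_div_Gamma_add_one hx)
      (fun s hs ↦ ?_) measurableSet_Ioi
    have := Gamma_add_one_pos (by linarith [mem_Ioi.mp hs] : -1 < s)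
    rw [harmonicInterp_eq_setIntegral_Ioo, ← integral_mul_const]
    refine setIntegral_congr_fun measurableSet_Ioo fun θ hθ ↦ (norm_of_nonneg ?_).symm
    exact mul_nonneg (one_sub_one_sub_rpow_div_mem_Icc (le_of_lt hs) (Ioo_subset_Icc_self hθ)).1
      (by positivity)

lemma integrableOn_volterra_sub_div {x : ℝ} (hx : 0 < x) :
    IntegrableOn (fun θ ↦ (volterra x - volterra ((1 - θ) * x)) / θ) (Ioo 0 1) :=
  IntegrableOn.congr_fun (integrable_one_sub_one_sub_rpow_div_mul hx).integral_prod_right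
    (fun _ hθ ↦ integral_one_sub_one_sub_rpow_div_mul hx hθ) measurableSet_Ioo

lemma integral_volterra_sub_div {x : ℝ} (hx : 0 < x) :
    ∫ θ in Ioo 0 1, (volterra x - volterra ((1 - θ) * x)) / θ =
      (log x + eulerMascheroniConstant) * volterra x + 1 := calc
  _ = ∫ θ in Ioo 0 1, ∫ s in Ioi 0, (1 - (1 - θ) ^ s) / θ * (x ^ s / Gamma (s + 1)) :=
    setIntegral_congr_fun measurableSet_Ioo fun θ hθ ↦
      (integral_one_sub_one_sub_rpow_div_mul hx hθ).symm
  _ = ∫ s in Ioi 0, ∫ θ in Ioo 0 1, (1 - (1 - θ) ^ s) / θ * (x ^ s / Gamma (s + 1)) :=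
    (integral_integral_swap (integrable_one_sub_one_sub_rpow_div_mul hx)).symm
  _ = ∫ s in Ioi 0, harmonicInterp s * (x ^ s / Gamma (s + 1)) := by
    simp_rw [integral_mul_const, ← harmonicInterp_eq_setIntegral_Ioo]
  _ = _ := integral_harmonicInterp_mul_rpow_div_Gamma_add_one hx

/-- For all `β, β′ > 0`:
`∫₀^1 (ν((1−θ)β′) ν(β) − ν(β′) ν((1−θ)β)) / θ dθ = log(β/β′) ν(β′) ν(β) + ν(β′) − ν(β)`. -/
theorem volterra_integral_identity (β β' : ℝ) (hβ : 0 < β) (hβ' : 0 < β') :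
    (∫ θ in (0 : ℝ)..1,
        (volterra ((1 - θ) * β') * volterra β - volterra β' * volterra ((1 - θ) * β)) * (1 / θ))
      = Real.log (β / β') * volterra β' * volterra β + volterra β' - volterra β := by
  have hsplit : EqOn
      (fun θ ↦ (volterra ((1 - θ) * β') * volterra β - volterra β' * volterra ((1 - θ) * β)) *
        (1 / θ))
      (fun θ ↦ volterra β' * ((volterra β - volterra ((1 - θ) * β)) / θ) -
        volterra β * ((volterra β' - volterra ((1 - θ) * β')) / θ)) (Ioo 0 1) := fun θ _ ↦ by
    ring
  rw [intervalIntegral.integral_of_le zero_le_one, integral_Ioc_eq_integral_Ioo,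
    setIntegral_congr_fun measurableSet_Ioo hsplit,
    integral_sub ((integrableOn_volterra_sub_div hβ).const_mul _)
      ((integrableOn_volterra_sub_div hβ').const_mul _),
    integral_const_mul, integral_const_mul, integral_volterra_sub_div hβ,
    integral_volterra_sub_div hβ', log_div hβ.ne' hβ'.ne']
  ring
end

section
/- Define R̄^{λ,λ′}_T(a) = (1 + H̄_T^{λ′}(a)) / (1 + H̄_T^λ(a)) for λ, λ′, T > 0 and a > 0. Then: (i) the map a ↦ R̄^{λ,λ′}_T(a) is monotone increasing on (0,∞) when λ′ ≤ λ, and monotone decreasing when λ′ ≥ λ; (ii) the map T ↦ R̄^{λ,λ′}_T(a) is monotone decreasing on (0,∞) when λ′ ≤ λ, and monotone increasing when λ′ ≥ λ. -/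
open MeasureTheory Real

/-- `H̄_T^λ(a) = ∫₀^T (e^{−a²/(2r)} / r) ν((T−r)λ) dr`. -/
noncomputable def Hbar (T lam a : ℝ) : ℝ :=
  ∫ r in (0 : ℝ)..T, Real.exp (-(a ^ 2 / (2 * r))) / r * volterra ((T - r) * lam)

/-- `R̄^{λ,λ′}_T(a) = (1 + H̄_T^{λ′}(a)) / (1 + H̄_T^λ(a))`. -/
noncomputable def Rbar (lam lam' T a : ℝ) : ℝ := (1 + Hbar T lam' a) / (1 + Hbar T lam a)

/-!
The substitution `r = T v` gives `H̄_T^λ(a) = K(a²/(2T), Tλ)` with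
`K(c, m) = ∫₀¹ e^{-c/v}/v · ν(m(1-v)) dv` (`scaledHbar`). Since `R̄^{λ',λ} = 1 / R̄^{λ,λ'}`, every
claim is a cross-multiplied inequality `(1 + ∫A)(1 + ∫D) ≤ (1 + ∫B)(1 + ∫C)`. Its linear part holds
pointwise, and its product part `∫∫ A(v) D(w) ≤ ∫∫ B(v) C(w)` holds after symmetrising in `(v, w)`.

Everything rests on the rearrangement inequality `a^s b^t + a^t b^s ≤ c^s d^t + c^t d^s` for
`c ≤ a, b` and `ab = cd` (convexity of `u ↦ e^{su}` in logarithmic coordinates). Integrated against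
`ds / Γ(s+1)` it gives `ν a + ν b ≤ ν c + ν d` and `ν a · ν b ≤ ν c · ν d`, which control the
dependence of `K` on `m`. The dependence on `c` comes from `e^{-c/v}` being totally positive of
order two in `(c, v)`. The variable `T` enters through both `c = a²/(2T)` and `m = Tλ`; they are
moved one at a time.
-/

open Set

theorem rpow_mul_rpow_add_rpow_mul_rpow_le {a b c d : ℝ} (s t : ℝ) (hc : 0 < c) (hca : c ≤ a)
    (hcb : c ≤ b) (habcd : a * b = c * d) :
    a ^ s * b ^ t + a ^ t * b ^ s ≤ c ^ s * d ^ t + c ^ t * d ^ s := by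
  obtain ⟨p, hp, rfl⟩ : ∃ p, 1 ≤ p ∧ a = c * p := ⟨a / c, (one_le_div hc).2 hca, by field_simp⟩
  obtain ⟨q, hq, rfl⟩ : ∃ q, 1 ≤ q ∧ b = c * q := ⟨b / c, (one_le_div hc).2 hcb, by field_simp⟩
  obtain rfl : d = c * (p * q) := mul_left_cancel₀ hc.ne' (by linarith)
  have hp0 : 0 ≤ p := by linarith
  have hq0 : 0 ≤ q := by linarith
  have same_sign : 0 ≤ (p ^ t - p ^ s) * (q ^ t - q ^ s) := by
    rcases le_total s t with hst | hts
    · exact mul_nonneg (sub_nonneg.2 (rpow_le_rpow_of_exponent_le hp hst))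
        (sub_nonneg.2 (rpow_le_rpow_of_exponent_le hq hst))
    · exact mul_nonneg_of_nonpos_of_nonpos (sub_nonpos.2 (rpow_le_rpow_of_exponent_le hp hts))
        (sub_nonpos.2 (rpow_le_rpow_of_exponent_le hq hts))
  simp only [mul_rpow hc.le hp0, mul_rpow hc.le hq0, mul_rpow hc.le (mul_nonneg hp0 hq0),
    mul_rpow hp0 hq0]
  nlinarith [mul_nonneg (mul_nonneg (rpow_nonneg hc.le s) (rpow_nonneg hc.le t)) same_sign]

section Symmetrization

variable {α : Type*} [MeasurableSpace α] {μ : Measure α} [SFinite μ]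

theorem integral_le_integral_of_add_swap_le {f g : α × α → ℝ} (hf : Integrable f (μ.prod μ))
    (hg : Integrable g (μ.prod μ)) (h : ∀ᵐ p ∂μ.prod μ, f p + f p.swap ≤ g p + g p.swap) :
    ∫ p, f p ∂μ.prod μ ≤ ∫ p, g p ∂μ.prod μ := by
  have key := integral_mono_ae (hf.add hf.swap) (hg.add hg.swap) h
  simp only [Pi.add_apply] at key
  rw [integral_add hf hf.swap, integral_add hg hg.swap] at key
  simp only [Function.comp_def, integral_prod_swap] at key
  linarith

theorem integral_mul_integral_le {A B C D : α → ℝ} (hA : Integrable A μ) (hB : Integrable B μ)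
    (hC : Integrable C μ) (hD : Integrable D μ)
    (h : ∀ᵐ p ∂μ.prod μ, A p.1 * D p.2 + A p.2 * D p.1 ≤ B p.1 * C p.2 + B p.2 * C p.1) :
    (∫ x, A x ∂μ) * (∫ x, D x ∂μ) ≤ (∫ x, B x ∂μ) * ∫ x, C x ∂μ := by
  rw [← integral_prod_mul, ← integral_prod_mul]
  exact integral_le_integral_of_add_swap_le (hA.mul_prod hD) (hB.mul_prod hC) h

theorem one_add_integral_mul_le {A B C D : α → ℝ} (hA : Integrable A μ) (hB : Integrable B μ)
    (hC : Integrable C μ) (hD : Integrable D μ) (hsum : ∀ᵐ x ∂μ, A x + D x ≤ B x + C x)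
    (hprod : ∀ᵐ p ∂μ.prod μ, A p.1 * D p.2 + A p.2 * D p.1 ≤ B p.1 * C p.2 + B p.2 * C p.1) :
    (1 + ∫ x, A x ∂μ) * (1 + ∫ x, D x ∂μ) ≤ (1 + ∫ x, B x ∂μ) * (1 + ∫ x, C x ∂μ) := by
  have hlin : (∫ x, A x ∂μ) + ∫ x, D x ∂μ ≤ (∫ x, B x ∂μ) + ∫ x, C x ∂μ := by
    rw [← integral_add hA hD, ← integral_add hB hC]
    exact integral_mono_ae (hA.add hD) (hB.add hC) hsum
  nlinarith [integral_mul_integral_le hA hB hC hD hprod]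

theorem ae_restrict_prod_mem {s : Set α} (hs : MeasurableSet s) :
    ∀ᵐ p ∂(μ.restrict s).prod (μ.restrict s), p.1 ∈ s ∧ p.2 ∈ s := by
  rw [Measure.prod_restrict]
  exact ae_restrict_mem (hs.prod hs)

end Symmetrization

theorem rpow_mul_exp_neg_le_Gamma_add_one {s M : ℝ} (hs : 0 ≤ s) (hM : 0 < M) :
    M ^ s * exp (-M) ≤ Gamma (s + 1) := by
  have hint : IntegrableOn (fun u => exp (-u) * u ^ s) (Ioi 0) := by
    simpa using GammaIntegral_convergent (s := s + 1) (by linarith)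
  rw [Gamma_eq_integral (by linarith), add_sub_cancel_right, ← integral_exp_neg_Ioi M,
    ← integral_const_mul]
  calc ∫ u in Ioi M, M ^ s * exp (-u)
      ≤ ∫ u in Ioi M, exp (-u) * u ^ s := by
        refine setIntegral_mono_on ((integrableOn_exp_neg_Ioi M).const_mul _)
          (hint.mono_set (Ioi_subset_Ioi hM.le)) measurableSet_Ioi fun u hu => ?_
        rw [mul_comm]
        exact mul_le_mul_of_nonneg_left (rpow_le_rpow hM.le (le_of_lt hu) hs) (exp_pos _).le
    _ ≤ ∫ u in Ioi 0, exp (-u) * u ^ s :=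
        setIntegral_mono_set hint
          (ae_restrict_of_forall_mem measurableSet_Ioi fun u hu =>
            mul_nonneg (exp_pos _).le (rpow_nonneg (le_of_lt hu) s))
          (Ioi_subset_Ioi hM.le).eventuallyLE

theorem continuousOn_volterra_integrand {x : ℝ} (hx : 0 < x) :
    ContinuousOn (fun s => x ^ s / Gamma (s + 1)) (Ioi 0) := by
  intro s hs
  have hs : 0 < s := hs
  have hΓ : ContinuousAt (fun s => Gamma (s + 1)) s :=
    ContinuousAt.comp (g := Gamma) (differentiableAt_Gamma fun m => ne_of_gt <| by
      linarith [(m.cast_nonneg : (0 : ℝ) ≤ m)]).continuousAt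
      (continuousAt_id.add continuousAt_const)
  exact ((continuousAt_const_rpow hx.ne').div hΓ
    (Gamma_pos_of_pos (by linarith)).ne').continuousWithinAt

theorem integrableOn_volterra_integrand {x : ℝ} (hx : 0 < x) :
    IntegrableOn (fun s => x ^ s / Gamma (s + 1)) (Ioi 0) := by
  refine ((exp_neg_integrableOn_Ioi 0 (log_pos one_lt_two)).const_mul (exp (2 * x))).mono'
    ((continuousOn_volterra_integrand hx).aestronglyMeasurable measurableSet_Ioi)
    (ae_restrict_of_forall_mem measurableSet_Ioi fun s hs => ?_)
  have hs : 0 < s := hs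
  have hΓ := rpow_mul_exp_neg_le_Gamma_add_one hs.le (by positivity : 0 < 2 * x)
  rw [norm_of_nonneg (div_nonneg (rpow_nonneg hx.le s) (Gamma_pos_of_pos (by linarith)).le)]
  calc x ^ s / Gamma (s + 1) ≤ x ^ s / ((2 * x) ^ s * exp (-(2 * x))) :=
        div_le_div_of_nonneg_left (rpow_nonneg hx.le s) (by positivity) hΓ
    _ = exp (2 * x) * exp (-log 2 * s) := by
        rw [mul_rpow zero_le_two hx.le, rpow_def_of_pos two_pos, exp_neg, neg_mul, exp_neg]
        field_simp

theorem volterra_nonneg {x : ℝ} (hx : 0 ≤ x) : 0 ≤ volterra x :=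
  setIntegral_nonneg measurableSet_Ioi fun s hs =>
    div_nonneg (rpow_nonneg hx s) (Gamma_pos_of_pos (by linarith [mem_Ioi.1 hs])).le

theorem volterra_mono {x y : ℝ} (hx : 0 < x) (hxy : x ≤ y) : volterra x ≤ volterra y :=
  setIntegral_mono_on (integrableOn_volterra_integrand hx)
    (integrableOn_volterra_integrand (hx.trans_le hxy)) measurableSet_Ioi fun s hs =>
    div_le_div_of_nonneg_right (rpow_le_rpow hx.le hxy (le_of_lt hs))
      (Gamma_pos_of_pos (by linarith [mem_Ioi.1 hs])).le

section MulEq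

variable {a b c d : ℝ}

theorem pos_of_mul_eq (hc : 0 < c) (hca : c ≤ a) (hcb : c ≤ b) (habcd : a * b = c * d) : 0 < d :=
  pos_of_mul_pos_right (habcd ▸ mul_pos (hc.trans_le hca) (hc.trans_le hcb)) hc.le

theorem volterra_add_le (hc : 0 < c) (hca : c ≤ a) (hcb : c ≤ b) (habcd : a * b = c * d) :
    volterra a + volterra b ≤ volterra c + volterra d := by
  have hd := pos_of_mul_eq hc hca hcb habcd
  have hint := fun {x : ℝ} (hx : 0 < x) => integrableOn_volterra_integrand hx
  rw [volterra, volterra, volterra, volterra,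
    ← integral_add (hint (hc.trans_le hca)) (hint (hc.trans_le hcb)),
    ← integral_add (hint hc) (hint hd)]
  refine setIntegral_mono_on ((hint (hc.trans_le hca)).add (hint (hc.trans_le hcb)))
    ((hint hc).add (hint hd)) measurableSet_Ioi fun s hs => ?_
  have key := rpow_mul_rpow_add_rpow_mul_rpow_le s 0 hc hca hcb habcd
  simp only [rpow_zero, mul_one, one_mul] at key
  simp only [← add_div]
  exact div_le_div_of_nonneg_right key (Gamma_pos_of_pos (by linarith [mem_Ioi.1 hs])).le

theorem volterra_mul_add_mul_le (hc : 0 < c) (hca : c ≤ a) (hcb : c ≤ b)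
    (habcd : a * b = c * d) {x y : ℝ} (hx : 0 < x) (hy : 0 < y) :
    volterra (a * x) * volterra (b * y) + volterra (a * y) * volterra (b * x)
      ≤ volterra (c * x) * volterra (d * y) + volterra (c * y) * volterra (d * x) := by
  have ha := hc.trans_le hca
  have hb := hc.trans_le hcb
  have hd := pos_of_mul_eq hc hca hcb habcd
  set μ := volume.restrict (Ioi (0 : ℝ))
  have hint : ∀ {u}, 0 < u → Integrable (fun s => u ^ s / Gamma (s + 1)) μ :=
    fun hu => integrableOn_volterra_integrand hu
  have hprod : ∀ {u v u' v' : ℝ}, 0 < u → 0 < v → 0 < u' → 0 < v' →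
      volterra u * volterra v + volterra u' * volterra v'
        = ∫ p, (u ^ p.1 / Gamma (p.1 + 1) * (v ^ p.2 / Gamma (p.2 + 1))
            + u' ^ p.1 / Gamma (p.1 + 1) * (v' ^ p.2 / Gamma (p.2 + 1))) ∂μ.prod μ := by
    intro u v u' v' hu hv hu' hv'
    rw [integral_add ((hint hu).mul_prod (hint hv)) ((hint hu').mul_prod (hint hv')),
      integral_prod_mul (fun s => u ^ s / Gamma (s + 1)) (fun s => v ^ s / Gamma (s + 1)),
      integral_prod_mul (fun s => u' ^ s / Gamma (s + 1)) (fun s => v' ^ s / Gamma (s + 1))]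
    rfl
  rw [hprod (by positivity) (by positivity) (by positivity) (by positivity),
    hprod (by positivity) (by positivity) (by positivity) (by positivity)]
  refine integral_le_integral_of_add_swap_le
    (((hint (by positivity)).mul_prod (hint (by positivity))).add
      ((hint (by positivity)).mul_prod (hint (by positivity))))
    (((hint (by positivity)).mul_prod (hint (by positivity))).add
      ((hint (by positivity)).mul_prod (hint (by positivity)))) ?_
  filter_upwards [ae_restrict_prod_mem measurableSet_Ioi] with ⟨s, t⟩ ⟨hs, ht⟩
  have hΓs := Gamma_pos_of_pos (by linarith [mem_Ioi.1 hs] : 0 < s + 1)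
  have hΓt := Gamma_pos_of_pos (by linarith [mem_Ioi.1 ht] : 0 < t + 1)
  -- symmetrised in `(s, t)`, the integrand is `(x^s y^t + x^t y^s) (a^s b^t + a^t b^s) / (Γ Γ)`
  have key := mul_le_mul_of_nonneg_left (rpow_mul_rpow_add_rpow_mul_rpow_le s t hc hca hcb habcd)
    (add_nonneg (mul_nonneg (rpow_nonneg hx.le s) (rpow_nonneg hy.le t))
      (mul_nonneg (rpow_nonneg hx.le t) (rpow_nonneg hy.le s)))
  simp only [Prod.swap, mul_rpow ha.le hx.le, mul_rpow ha.le hy.le, mul_rpow hb.le hx.le,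
    mul_rpow hb.le hy.le, mul_rpow hc.le hx.le, mul_rpow hc.le hy.le, mul_rpow hd.le hx.le,
    mul_rpow hd.le hy.le]
  field_simp
  linarith

theorem volterra_mul_le (hc : 0 < c) (hca : c ≤ a) (hcb : c ≤ b) (habcd : a * b = c * d) :
    volterra a * volterra b ≤ volterra c * volterra d := by
  have := volterra_mul_add_mul_le hc hca hcb habcd one_pos one_pos
  simp only [mul_one] at this
  linarith

end MulEq

noncomputable def scaledHbar (c m : ℝ) : ℝ :=
  ∫ v in Ioo 0 1, exp (-(c / v)) / v * volterra (m * (1 - v))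

theorem Hbar_eq_scaledHbar {T : ℝ} (hT : 0 < T) (lam a : ℝ) :
    Hbar T lam a = scaledHbar (a ^ 2 / (2 * T)) (T * lam) := by
  have hscale := intervalIntegral.smul_integral_comp_mul_left (a := 0) (b := 1)
    (fun r => exp (-(a ^ 2 / (2 * r))) / r * volterra ((T - r) * lam)) T
  rw [mul_zero, mul_one] at hscale
  rw [Hbar, ← hscale, intervalIntegral.integral_of_le zero_le_one,
    ← Measure.restrict_congr_set Ioo_ae_eq_Ioc, ← integral_smul, scaledHbar]
  refine setIntegral_congr_fun measurableSet_Ioo fun v hv => ?_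
  have hv : v ≠ 0 := hv.1.ne'
  simp only [smul_eq_mul]
  rw [show (T - T * v) * lam = T * lam * (1 - v) by ring,
    show a ^ 2 / (2 * (T * v)) = a ^ 2 / (2 * T) / v by field_simp]
  field_simp

theorem exp_neg_div_div_le {c v : ℝ} (hc : 0 < c) (hv : 0 < v) : exp (-(c / v)) / v ≤ c⁻¹ := by
  rw [div_le_iff₀ hv, exp_neg]
  calc (exp (c / v))⁻¹ ≤ (c / v)⁻¹ :=
        inv_anti₀ (by positivity) (by linarith [add_one_le_exp (c / v)])
    _ = c⁻¹ * v := by rw [inv_div, div_eq_inv_mul]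

theorem exp_neg_div_div_mul_le {c₁ c₂ v w : ℝ} (hc : c₁ ≤ c₂) (hv : 0 < v) (hvw : v ≤ w) :
    exp (-(c₂ / v)) / v * (exp (-(c₁ / w)) / w) ≤ exp (-(c₁ / v)) / v * (exp (-(c₂ / w)) / w) := by
  have hw := hv.trans_le hvw
  rw [div_mul_div_comm, div_mul_div_comm, ← exp_add, ← exp_add]
  refine div_le_div_of_nonneg_right (exp_le_exp.2 ?_) (by positivity)
  have := div_le_div_of_nonneg_left (sub_nonneg.2 hc) hv hvw
  rw [sub_div, sub_div] at this
  linarith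

theorem antitoneOn_volterra_mul_one_sub {m : ℝ} (hm : 0 < m) :
    AntitoneOn (fun v => volterra (m * (1 - v))) (Ioo 0 1) := fun v _ w hw hvw =>
  volterra_mono (mul_pos hm (by linarith [hw.2])) (by gcongr)

theorem integrableOn_scaledHbar_integrand {c m : ℝ} (hc : 0 < c) (hm : 0 < m) :
    IntegrableOn (fun v => exp (-(c / v)) / v * volterra (m * (1 - v))) (Ioo 0 1) := by
  have hE : ContinuousOn (fun v => exp (-(c / v)) / v) (Ioo 0 1) :=
    ((continuousOn_const.div continuousOn_id fun v hv => hv.1.ne').neg.rexp).div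
      continuousOn_id fun v hv => hv.1.ne'
  refine (integrableOn_const (C := c⁻¹ * volterra m) measure_Ioo_lt_top.ne).mono'
    ((hE.aestronglyMeasurable measurableSet_Ioo).mul (aemeasurable_restrict_of_antitoneOn
      measurableSet_Ioo (antitoneOn_volterra_mul_one_sub hm)).aestronglyMeasurable)
    (ae_restrict_of_forall_mem measurableSet_Ioo fun v hv => ?_)
  have hx : 0 < m * (1 - v) := mul_pos hm (by linarith [hv.2])
  rw [norm_of_nonneg (mul_nonneg (div_nonneg (exp_pos _).le hv.1.le) (volterra_nonneg hx.le))]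
  exact mul_le_mul (exp_neg_div_div_le hc hv.1) (volterra_mono hx (by nlinarith [hv.1]))
    (volterra_nonneg hx.le) (by have := volterra_nonneg hm.le; positivity)

theorem scaledHbar_nonneg (c : ℝ) {m : ℝ} (hm : 0 ≤ m) : 0 ≤ scaledHbar c m :=
  setIntegral_nonneg measurableSet_Ioo fun v hv =>
    mul_nonneg (div_nonneg (exp_pos _).le hv.1.le)
      (volterra_nonneg (mul_nonneg hm (by linarith [hv.2])))

theorem one_add_scaledHbar_mul_le_of_le {c₁ c₂ m m' : ℝ} (hc₁ : 0 < c₁) (hc : c₁ ≤ c₂)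
    (hm' : 0 < m') (hm : m' ≤ m) :
    (1 + scaledHbar c₁ m') * (1 + scaledHbar c₂ m)
      ≤ (1 + scaledHbar c₂ m') * (1 + scaledHbar c₁ m) := by
  have hint := fun {c m : ℝ} (hc : 0 < c) (hm : 0 < m) => integrableOn_scaledHbar_integrand hc hm
  have hc₂ := hc₁.trans_le hc
  have hm₀ := hm'.trans_le hm
  have hx : ∀ {m v}, 0 < m → v ∈ Ioo (0 : ℝ) 1 → 0 < m * (1 - v) :=
    fun hm hv => mul_pos hm (by linarith [hv.2])
  -- the exponential and the Volterra factors are oppositely ordered in `(v, w)`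
  have hcross : ∀ v w, v ∈ Ioo (0 : ℝ) 1 → w ∈ Ioo (0 : ℝ) 1 → v ≤ w →
      exp (-(c₁ / v)) / v * volterra (m' * (1 - v))
          * (exp (-(c₂ / w)) / w * volterra (m * (1 - w)))
        + exp (-(c₁ / w)) / w * volterra (m' * (1 - w))
          * (exp (-(c₂ / v)) / v * volterra (m * (1 - v)))
      ≤ exp (-(c₂ / v)) / v * volterra (m' * (1 - v))
          * (exp (-(c₁ / w)) / w * volterra (m * (1 - w)))
        + exp (-(c₂ / w)) / w * volterra (m' * (1 - w))
          * (exp (-(c₁ / v)) / v * volterra (m * (1 - v))) := by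
    intro v w hv hw hvw
    have hexp := exp_neg_div_div_mul_le hc hv.1 hvw
    have hvol := volterra_mul_le (hx hm' hw)
      (mul_le_mul_of_nonneg_left (by linarith) hm'.le)
      (mul_le_mul_of_nonneg_right hm (by linarith [hw.2])) (by ring :
      m' * (1 - v) * (m * (1 - w)) = m' * (1 - w) * (m * (1 - v)))
    nlinarith [mul_nonneg (sub_nonneg.2 hexp) (sub_nonneg.2 hvol)]
  refine one_add_integral_mul_le (hint hc₁ hm') (hint hc₂ hm') (hint hc₁ hm₀) (hint hc₂ hm₀)
    (ae_restrict_of_forall_mem measurableSet_Ioo fun v hv => ?_) ?_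
  · have hexp : exp (-(c₂ / v)) / v ≤ exp (-(c₁ / v)) / v :=
      div_le_div_of_nonneg_right (exp_le_exp.2 (neg_le_neg (div_le_div_of_nonneg_right hc hv.1.le)))
        hv.1.le
    have hvol := volterra_mono (hx hm' hv) (mul_le_mul_of_nonneg_right hm (by linarith [hv.2]))
    nlinarith [mul_nonneg (sub_nonneg.2 hexp) (sub_nonneg.2 hvol)]
  · filter_upwards [ae_restrict_prod_mem measurableSet_Ioo] with ⟨v, w⟩ ⟨hv, hw⟩
    rcases le_total v w with hvw | hwv
    · exact hcross v w hv hw hvw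
    · linarith [hcross w v hw hv hwv]

theorem one_add_scaledHbar_mul_le_of_mul_eq {a b c d e : ℝ} (he : 0 < e) (hc : 0 < c)
    (hca : c ≤ a) (hcb : c ≤ b) (habcd : a * b = c * d) :
    (1 + scaledHbar e a) * (1 + scaledHbar e b) ≤ (1 + scaledHbar e c) * (1 + scaledHbar e d) := by
  have hint := fun {m : ℝ} (hm : 0 < m) => integrableOn_scaledHbar_integrand he hm
  have hd := pos_of_mul_eq hc hca hcb habcd
  refine one_add_integral_mul_le (hint (hc.trans_le hca)) (hint hc) (hint hd)
    (hint (hc.trans_le hcb)) (ae_restrict_of_forall_mem measurableSet_Ioo fun v hv => ?_) ?_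
  · have hv' : 0 < 1 - v := by linarith [hv.2]
    have hsum := volterra_add_le (mul_pos hc hv') (by gcongr) (by gcongr)
      (by linear_combination (1 - v) ^ 2 * habcd :
        a * (1 - v) * (b * (1 - v)) = c * (1 - v) * (d * (1 - v)))
    have hE : 0 ≤ exp (-(e / v)) / v := div_nonneg (exp_pos _).le hv.1.le
    nlinarith [mul_le_mul_of_nonneg_left hsum hE]
  · filter_upwards [ae_restrict_prod_mem measurableSet_Ioo] with ⟨v, w⟩ ⟨hv, hw⟩
    have hcross := volterra_mul_add_mul_le hc hca hcb habcd (x := 1 - v) (y := 1 - w)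
      (by linarith [hv.2]) (by linarith [hw.2])
    have hE : 0 ≤ exp (-(e / v)) / v * (exp (-(e / w)) / w) :=
      mul_nonneg (div_nonneg (exp_pos _).le hv.1.le) (div_nonneg (exp_pos _).le hw.1.le)
    nlinarith [mul_le_mul_of_nonneg_left hcross hE]

theorem one_add_scaledHbar_pos (c : ℝ) {m : ℝ} (hm : 0 ≤ m) : 0 < 1 + scaledHbar c m := by
  linarith [scaledHbar_nonneg c hm]

theorem Rbar_pos {lam lam' T : ℝ} (hlam : 0 ≤ lam) (hlam' : 0 ≤ lam') (hT : 0 < T) (a : ℝ) :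
    0 < Rbar lam lam' T a := by
  rw [Rbar, Hbar_eq_scaledHbar hT, Hbar_eq_scaledHbar hT]
  exact div_pos (one_add_scaledHbar_pos _ (mul_nonneg hT.le hlam'))
    (one_add_scaledHbar_pos _ (mul_nonneg hT.le hlam))

theorem inv_Rbar (lam lam' T a : ℝ) : (Rbar lam lam' T a)⁻¹ = Rbar lam' lam T a := inv_div _ _

theorem monotoneOn_Rbar_a {lam lam' T : ℝ} (hlam' : 0 < lam') (h : lam' ≤ lam) (hT : 0 < T) :
    MonotoneOn (fun a => Rbar lam lam' T a) (Ioi 0) := by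
  intro a₁ ha₁ a₂ _ ha
  have ha₁ : 0 < a₁ := ha₁
  simp only [Rbar, Hbar_eq_scaledHbar hT]
  rw [div_le_div_iff₀ (one_add_scaledHbar_pos _ (mul_nonneg hT.le (hlam'.le.trans h)))
    (one_add_scaledHbar_pos _ (mul_nonneg hT.le (hlam'.le.trans h)))]
  exact one_add_scaledHbar_mul_le_of_le (by positivity) (by gcongr) (by positivity) (by gcongr)

theorem antitoneOn_Rbar_T {lam lam' a : ℝ} (hlam' : 0 < lam') (h : lam' ≤ lam) (ha : 0 < a) :
    AntitoneOn (fun T => Rbar lam lam' T a) (Ioi 0) := by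
  intro T₁ hT₁ T₂ hT₂ hT
  have hT₁ : 0 < T₁ := hT₁
  have hT₂ : 0 < T₂ := hT₂
  have hlam := hlam'.trans_le h
  simp only [Rbar, Hbar_eq_scaledHbar hT₁, Hbar_eq_scaledHbar hT₂]
  have hpos := fun (c : ℝ) {m : ℝ} (hm : 0 < m) => one_add_scaledHbar_pos c hm.le
  calc _ ≤ (1 + scaledHbar (a ^ 2 / (2 * T₁)) (T₂ * lam'))
        / (1 + scaledHbar (a ^ 2 / (2 * T₁)) (T₂ * lam)) := by
        rw [div_le_div_iff₀ (hpos _ (by positivity)) (hpos _ (by positivity))]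
        exact one_add_scaledHbar_mul_le_of_le (by positivity) (by gcongr) (by positivity)
          (by gcongr)
    _ ≤ _ := by
        rw [div_le_div_iff₀ (hpos _ (by positivity)) (hpos _ (by positivity))]
        exact one_add_scaledHbar_mul_le_of_mul_eq (by positivity) (by positivity) (by gcongr)
          (by gcongr) (by ring)

theorem antitoneOn_Rbar_a {lam lam' T : ℝ} (hlam : 0 < lam) (h : lam ≤ lam') (hT : 0 < T) :
    AntitoneOn (fun a => Rbar lam lam' T a) (Ioi 0) := fun a₁ ha₁ a₂ ha₂ ha => by
  simp only [← inv_Rbar lam' lam]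
  exact inv_anti₀ (Rbar_pos (hlam.trans_le h).le hlam.le hT a₁)
    (monotoneOn_Rbar_a hlam h hT ha₁ ha₂ ha)

theorem monotoneOn_Rbar_T {lam lam' a : ℝ} (hlam : 0 < lam) (h : lam ≤ lam') (ha : 0 < a) :
    MonotoneOn (fun T => Rbar lam lam' T a) (Ioi 0) := fun T₁ hT₁ T₂ hT₂ hT => by
  simp only [← inv_Rbar lam' lam]
  exact inv_anti₀ (Rbar_pos (hlam.trans_le h).le hlam.le hT₂ a)
    (antitoneOn_Rbar_T hlam h ha hT₁ hT₂ hT)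

/-- Monotonicity of `R̄^{λ,λ′}_T(a)`:
(i) `a ↦ R̄^{λ,λ′}_T(a)` is increasing on `(0,∞)` when `λ′ ≤ λ` and decreasing when `λ′ ≥ λ`;
(ii) `T ↦ R̄^{λ,λ′}_T(a)` is decreasing on `(0,∞)` when `λ′ ≤ λ` and increasing when `λ′ ≥ λ`. -/
theorem Rbar_monotonicity (lam lam' : ℝ) (hlam : 0 < lam) (hlam' : 0 < lam') :
    (∀ T : ℝ, 0 < T → lam' ≤ lam →
        MonotoneOn (fun a => Rbar lam lam' T a) (Set.Ioi 0)) ∧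
    (∀ T : ℝ, 0 < T → lam ≤ lam' →
        AntitoneOn (fun a => Rbar lam lam' T a) (Set.Ioi 0)) ∧
    (∀ a : ℝ, 0 < a → lam' ≤ lam →
        AntitoneOn (fun T => Rbar lam lam' T a) (Set.Ioi 0)) ∧
    (∀ a : ℝ, 0 < a → lam ≤ lam' →
        MonotoneOn (fun T => Rbar lam lam' T a) (Set.Ioi 0)) :=
  ⟨fun _ hT h => monotoneOn_Rbar_a hlam' h hT, fun _ hT h => antitoneOn_Rbar_a hlam h hT,
    fun _ ha h => antitoneOn_Rbar_T hlam' h ha, fun _ ha h => monotoneOn_Rbar_T hlam h ha⟩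
end

section
/- For all real α > 0 and β > 0, the function υ(α,β) := ∫₀^1 (e^{−α/s}/s) · (e^{−β/(1−s)}/(1−s)) ds satisfies υ(α,β) ≤ 2 e^{−β} E(α) + 2 e^{−α} E(β). -/
/-!
Split `[0, 1]` at `1/2`. On `(0, 1/2]` the factor `e^{−β/(1−s)}/(1−s)` is at most `2 e^{−β}`,
and the substitution `y = α/s` turns `∫₀^{1/2} e^{−α/s}/s ds` into `E(2α) ≤ E(α)`.
The reflection `s ↦ 1 − s` exchanges the roles of `α` and `β` on the other half.
-/

open MeasureTheory Real

/-- The exponential integral `E(x) = ∫_x^∞ (e^{−y}/y) dy` for `x > 0`. -/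
noncomputable def expInt (x : ℝ) : ℝ := ∫ y in Set.Ioi x, Real.exp (-y) / y

open Set

noncomputable def expKernel (a s : ℝ) : ℝ := exp (-(a / s)) / s

lemma measurable_expKernel (a : ℝ) : Measurable (expKernel a) := by
  unfold expKernel; fun_prop

lemma expKernel_nonneg (a : ℝ) {s : ℝ} (hs : 0 ≤ s) : 0 ≤ expKernel a s := by
  unfold expKernel; positivity

lemma expKernel_le {a s : ℝ} (ha : 0 < a) (hs : 0 ≤ s) : expKernel a s ≤ exp (-1) / a := by
  rcases hs.eq_or_lt with rfl | hs
  · simp only [expKernel, div_zero]; positivity -- `expKernel a 0 = 0` since `x / 0 = 0`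
  calc expKernel a s = a / s * exp (-(a / s)) / a := by rw [expKernel]; field_simp
    _ ≤ exp (-1) / a := by gcongr; exact mul_exp_neg_le_exp_neg_one _

lemma expKernel_le_two_mul_exp_neg {a s : ℝ} (ha : 0 ≤ a) (hs : 1 / 2 ≤ s) (hs' : s ≤ 1) :
    expKernel a s ≤ 2 * exp (-a) := by
  have hs0 : 0 < s := by linarith
  have hexp : exp (-(a / s)) ≤ exp (-a) := by
    gcongr
    exact le_div_self ha hs0 hs'
  rw [expKernel, div_le_iff₀ hs0]
  nlinarith [exp_pos (-a)]

lemma intervalIntegrable_expKernel {a c : ℝ} (ha : 0 < a) (hc : 0 ≤ c) :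
    IntervalIntegrable (expKernel a) volume 0 c := by
  rw [intervalIntegrable_iff_integrableOn_Ioc_of_le hc]
  refine .of_bound measure_Ioc_lt_top (measurable_expKernel a).aestronglyMeasurable
    (exp (-1) / a) ?_
  filter_upwards [ae_restrict_mem measurableSet_Ioc] with s hs
  rw [norm_of_nonneg (expKernel_nonneg a hs.1.le)]
  exact expKernel_le ha hs.1.le

lemma intervalIntegrable_expKernel_mul_expKernel_one_sub {a b : ℝ} (ha : 0 < a) (hb : 0 < b) :
    IntervalIntegrable (fun s ↦ expKernel a s * expKernel b (1 - s)) volume 0 1 := by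
  rw [intervalIntegrable_iff_integrableOn_Ioc_of_le zero_le_one]
  refine .of_bound measure_Ioc_lt_top ?_ (exp (-1) / a * (exp (-1) / b)) ?_
  · exact ((measurable_expKernel a).mul
      ((measurable_expKernel b).comp (measurable_const.sub measurable_id))).aestronglyMeasurable
  filter_upwards [ae_restrict_mem measurableSet_Ioc] with s ⟨hs0, hs1⟩
  have hs1' : 0 ≤ 1 - s := sub_nonneg.mpr hs1
  rw [norm_of_nonneg (mul_nonneg (expKernel_nonneg a hs0.le) (expKernel_nonneg b hs1'))]
  exact mul_le_mul (expKernel_le ha hs0.le) (expKernel_le hb hs1')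
    (expKernel_nonneg b hs1') (by positivity)

lemma integrableOn_exp_neg_div_self_Ioi {x : ℝ} (hx : 0 < x) :
    IntegrableOn (fun y ↦ exp (-y) / y) (Ioi x) := by
  refine ((exp_neg_integrableOn_Ioi x one_pos).const_mul x⁻¹).mono'
    (by fun_prop : Measurable fun y : ℝ ↦ exp (-y) / y).aestronglyMeasurable ?_
  filter_upwards [ae_restrict_mem measurableSet_Ioi] with y hy
  have hy0 : 0 < y := hx.trans hy
  rw [norm_of_nonneg (by positivity), neg_one_mul, div_eq_inv_mul]
  gcongr
  exact hy.le

lemma expInt_le_of_le {x y : ℝ} (hx : 0 < x) (hxy : x ≤ y) : expInt y ≤ expInt x := by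
  refine setIntegral_mono_set (integrableOn_exp_neg_div_self_Ioi hx) ?_
    (Ioi_subset_Ioi hxy).eventuallyLE
  filter_upwards [ae_restrict_mem measurableSet_Ioi] with t ht
  have ht0 : 0 < t := hx.trans ht
  positivity

lemma image_div_Ioo_zero {a c : ℝ} (ha : 0 < a) (hc : 0 < c) :
    (fun s ↦ a / s) '' Ioo 0 c = Ioi (a / c) := by
  ext y
  simp only [mem_image, mem_Ioo, mem_Ioi]
  constructor
  · rintro ⟨s, ⟨hs0, hsc⟩, rfl⟩
    exact div_lt_div_of_pos_left ha hs0 hsc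
  · intro hy
    have hy0 : 0 < y := (div_pos ha hc).trans hy
    refine ⟨a / y, ⟨div_pos ha hy0, ?_⟩, div_div_cancel₀ ha.ne'⟩
    rwa [div_lt_comm₀ hy0 hc]

lemma integral_expKernel_eq_expInt {a c : ℝ} (ha : 0 < a) (hc : 0 < c) :
    ∫ s in (0 : ℝ)..c, expKernel a s = expInt (a / c) := by
  have hderiv : ∀ s ∈ Ioo (0 : ℝ) c,
      HasDerivWithinAt (fun s ↦ a / s) (-(a / s ^ 2)) (Ioo 0 c) s := fun s hs ↦ by
    simpa [div_eq_mul_inv] using ((hasDerivAt_inv hs.1.ne').const_mul a).hasDerivWithinAt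
  have hinj : InjOn (fun s ↦ a / s) (Ioo (0 : ℝ) c) := fun s _ t _ hst ↦
    inv_injective (mul_left_cancel₀ ha.ne' hst)
  rw [expInt, ← image_div_Ioo_zero ha hc,
    integral_image_eq_integral_abs_deriv_smul measurableSet_Ioo hderiv hinj,
    intervalIntegral.integral_of_le hc.le, integral_Ioc_eq_integral_Ioo]
  refine setIntegral_congr_fun measurableSet_Ioo fun s hs ↦ ?_
  have hs0 : 0 < s := hs.1
  rw [abs_neg, abs_of_pos (by positivity), smul_eq_mul, expKernel]
  field_simp

lemma integral_expKernel_mul_expKernel_one_sub_le {a b : ℝ} (ha : 0 < a) (hb : 0 < b) :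
    ∫ s in (0 : ℝ)..1 / 2, expKernel a s * expKernel b (1 - s) ≤ 2 * exp (-b) * expInt a := by
  have hhalf : (1 / 2 : ℝ) ∈ uIcc 0 1 := by rw [uIcc_of_le zero_le_one]; norm_num
  have hint := (intervalIntegrable_expKernel_mul_expKernel_one_sub ha hb).mono_set
    (uIcc_subset_uIcc left_mem_uIcc hhalf)
  calc ∫ s in (0 : ℝ)..1 / 2, expKernel a s * expKernel b (1 - s)
      ≤ ∫ s in (0 : ℝ)..1 / 2, 2 * exp (-b) * expKernel a s := by
        refine intervalIntegral.integral_mono_on_of_le_Ioo (by norm_num) hint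
          ((intervalIntegrable_expKernel ha (by norm_num)).const_mul _) fun s ⟨hs0, hs1⟩ ↦ ?_
        rw [mul_comm _ (expKernel a s)]
        exact mul_le_mul_of_nonneg_left
          (expKernel_le_two_mul_exp_neg hb.le (by linarith) (by linarith))
          (expKernel_nonneg a hs0.le)
    _ = 2 * exp (-b) * expInt (2 * a) := by
        rw [intervalIntegral.integral_const_mul, integral_expKernel_eq_expInt ha (by norm_num)]
        ring_nf
    _ ≤ 2 * exp (-b) * expInt a := by
        gcongr
        exact expInt_le_of_le ha (by linarith)

/-- For all `α, β > 0`, the function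
`υ(α,β) = ∫₀^1 (e^{−α/s}/s)(e^{−β/(1−s)}/(1−s)) ds` satisfies
`υ(α,β) ≤ 2 e^{−β} E(α) + 2 e^{−α} E(β)`. -/
theorem upsilon_upper_bound (α β : ℝ) (hα : 0 < α) (hβ : 0 < β) :
    (∫ s in (0 : ℝ)..1, (Real.exp (-(α / s)) / s) * (Real.exp (-(β / (1 - s))) / (1 - s)))
      ≤ 2 * Real.exp (-β) * expInt α + 2 * Real.exp (-α) * expInt β := by
  have hint := intervalIntegrable_expKernel_mul_expKernel_one_sub hα hβ
  have hhalf : (1 / 2 : ℝ) ∈ uIcc 0 1 := by rw [uIcc_of_le zero_le_one]; norm_num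
  have hreflect : ∫ s in (1 / 2 : ℝ)..1, expKernel α s * expKernel β (1 - s)
      = ∫ s in (0 : ℝ)..1 / 2, expKernel β s * expKernel α (1 - s) := by
    simpa [mul_comm, show (1 : ℝ) - 2⁻¹ = 2⁻¹ by norm_num] using
      intervalIntegral.integral_comp_sub_left
        (fun s ↦ expKernel β s * expKernel α (1 - s)) (a := 1 / 2) (b := 1) (1 : ℝ)
  change ∫ s in (0 : ℝ)..1, expKernel α s * expKernel β (1 - s) ≤ _
  rw [← intervalIntegral.integral_add_adjacent_intervals
    (hint.mono_set (uIcc_subset_uIcc left_mem_uIcc hhalf))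
    (hint.mono_set (uIcc_subset_uIcc hhalf right_mem_uIcc)), hreflect]
  exact add_le_add (integral_expKernel_mul_expKernel_one_sub_le hα hβ)
    (integral_expKernel_mul_expKernel_one_sub_le hβ hα)
end
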